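/- Let X be a finitely primitive countable Markov shift, φ: X → ℝ a measurable function and μ_φ a Gibbs state for φ. Then for every symbol a ∈ S and every y ∈ X, P(φ) = lim_{n→∞} (1/n) log Z_n(φ,[a]∩Per_n(σ)) = lim_{n→∞} (1/n) log Z_n(φ,Per_n(σ)) = lim_{n→∞} (1/n) log Z_n(φ,[a]∩σ^{-n}y) = lim_{n→∞} (1/n) log Z_n(φ,σ^{-n}y). -/

import Mathlib

open MeasureTheory Filter Topology Set
open scoped ENNReal NNReal

namespace CMS

/-! ### Generic dynamical notions -/

variable {X : Type*}

/-- Birkhoff sum `S_n φ`. -/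
noncomputable def birkhoff (T : X → X) (φ : X → ℝ) (n : ℕ) (x : X) : ℝ :=
  ∑ i ∈ Finset.range n, φ (T^[i] x)

/-- A measure is invariant under `T`. -/
def Invariant [MeasurableSpace X] (T : X → X) (μ : Measure X) : Prop :=
  Measure.map T μ = μ

/-- `∫ φ dμ > -∞`, i.e. the negative part of `φ` is integrable. -/
def IntegralGtBot [MeasurableSpace X] (φ : X → ℝ) (μ : Measure X) : Prop :=
  (∫⁻ x, ENNReal.ofReal (-φ x) ∂μ) ≠ ⊤

/-- The integral of `φ`, with values in `EReal` (defined whenever one of the parts is finite). -/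
noncomputable def eintegral [MeasurableSpace X] (φ : X → ℝ) (μ : Measure X) : EReal :=
  ((∫⁻ x, ENNReal.ofReal (φ x) ∂μ : ℝ≥0∞) : EReal) -
    ((∫⁻ x, ENNReal.ofReal (-φ x) ∂μ : ℝ≥0∞) : EReal)

/-- Entropy of the countable partition induced by a map `g` with countable range. -/
noncomputable def partitionEntropy [MeasurableSpace X] {α : Type*} (μ : Measure X) (g : X → α) :
    ℝ≥0∞ :=
  ∑' a : α, ENNReal.ofReal (-((μ (g ⁻¹' {a})).toReal * Real.log ((μ (g ⁻¹' {a})).toReal)))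

/-- Kolmogorov–Sinaĭ entropy of `T` with respect to `μ`: the supremum over finite measurable
partitions (coded by maps `X → ℕ` with finite range) of the asymptotic entropy of iterated
joins of the partition. -/
noncomputable def entropy [MeasurableSpace X] (T : X → X) (μ : Measure X) : ℝ≥0∞ :=
  ⨆ (p : X → ℕ) (_ : Measurable p ∧ (Set.range p).Finite),
    atTop.liminf fun n : ℕ =>
      ENNReal.ofReal ((n : ℝ)⁻¹) * partitionEntropy μ (fun x => fun i : Fin n => p (T^[i] x))

/-- The empirical measure `δ_x^n = (1/n) ∑_{i<n} δ_{T^i x}` (with junk convention `n = 0 ↦ n = 1`,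
irrelevant since only `n ≥ 1` is ever used). -/
noncomputable def empirical [MeasurableSpace X] (T : X → X) (x : X) (n : ℕ) :
    ProbabilityMeasure X :=
  ⟨((max n 1 : ℕ) : ℝ≥0∞)⁻¹ • ∑ i ∈ Finset.range (max n 1), Measure.dirac (T^[i] x), by
    refine ⟨?_⟩
    have h1 : (∑ i ∈ Finset.range (max n 1), Measure.dirac (T^[i] x)) Set.univ
        = ((max n 1 : ℕ) : ℝ≥0∞) := by
      rw [Measure.finset_sum_apply]
      simp
    rw [Measure.smul_apply, h1, smul_eq_mul, ENNReal.inv_mul_cancel] <;> simp⟩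

noncomputable instance [MeasurableSpace X] [TopologicalSpace X] [OpensMeasurableSpace X] :
    MeasurableSpace (ProbabilityMeasure X) := borel _

/-- Sets of periodic points. -/
def perSet (T : X → X) (n : ℕ) : Set X := {x | T^[n] x = x}

/-- Sets of iterated preimages of a point. -/
def preimSet (T : X → X) (n : ℕ) (y : X) : Set X := {x | T^[n] x = y}

/-- The partition function `Z_n(φ, C)` over a subset `C`. -/
noncomputable def Zfn [MeasurableSpace X] (T : X → X) (φ : X → ℝ) (n : ℕ) (C : Set X) : ℝ≥0∞ :=
  ∑' x : C, ENNReal.ofReal (Real.exp (birkhoff T φ n x))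

/-- The distribution of the empirical measures under `μ`. -/
noncomputable def empDistr [MeasurableSpace X] [TopologicalSpace X] [OpensMeasurableSpace X]
    (T : X → X) (μ : Measure X) (n : ℕ) : Measure (ProbabilityMeasure X) :=
  Measure.map (fun x => empirical T x n) μ

/-- The distribution `Z_n(φ,C)⁻¹ ∑_{x ∈ C} e^{S_nφ(x)} δ_{δ_x^n}` on the space of probability
measures, for a countable set `C` (of weighted periodic points or iterated preimages). -/
noncomputable def weightedDistr [MeasurableSpace X] [TopologicalSpace X] [OpensMeasurableSpace X]
    (T : X → X) (φ : X → ℝ) (n : ℕ) (C : Set X) : Measure (ProbabilityMeasure X) :=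
  (Zfn T φ n C)⁻¹ •
    Measure.sum (fun x : C =>
      ENNReal.ofReal (Real.exp (birkhoff T φ n x)) • Measure.dirac (empirical T (x : X) n))

/-! ### Large deviations notions -/

variable {Y : Type*}

/-- The large deviation principle for a sequence of (sub)probability measures with rate
function `J`. -/
def HasLDP [TopologicalSpace Y] [MeasurableSpace Y] (μ : ℕ → Measure Y) (J : Y → EReal) : Prop :=
  (∀ G : Set Y, IsOpen G →
      -(⨅ y ∈ G, J y) ≤
        atTop.liminf fun n : ℕ => (((n : ℝ)⁻¹ : ℝ) : EReal) * ENNReal.log (μ n G)) ∧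
  (∀ K : Set Y, IsClosed K →
      atTop.limsup (fun n : ℕ => (((n : ℝ)⁻¹ : ℝ) : EReal) * ENNReal.log (μ n K)) ≤
        -(⨅ y ∈ K, J y))

/-- Exponential tightness of a sequence of measures. -/
def ExpTight [TopologicalSpace Y] [MeasurableSpace Y] (μ : ℕ → Measure Y) : Prop :=
  ∀ L : ℝ, 0 < L → ∃ K : Set Y, IsCompact K ∧
    atTop.limsup (fun n : ℕ => (((n : ℝ)⁻¹ : ℝ) : EReal) * ENNReal.log (μ n Kᶜ)) ≤ ((-L : ℝ) : EReal)

/-- A good rate function: lower semicontinuous with compact sublevel sets. -/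
def GoodRate [TopologicalSpace Y] (J : Y → EReal) : Prop :=
  LowerSemicontinuous J ∧ ∀ α : ℝ, 0 ≤ α → IsCompact {y | J y ≤ (α : EReal)}

/-- The rate function `I(μ) = - inf_{G ∋ μ} sup_G F`. -/
noncomputable def rateOf [TopologicalSpace Y] (F : Y → EReal) (μ : Y) : EReal :=
  -(⨅ (G : Set Y) (_ : IsOpen G ∧ μ ∈ G), ⨆ ν ∈ G, F ν)

/-- The convex combination `t μ + (1-t) ν` of two probability measures. -/
noncomputable def mix [MeasurableSpace X] (t : ℝ) (h0 : 0 ≤ t) (h1 : t ≤ 1)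
    (μ ν : ProbabilityMeasure X) : ProbabilityMeasure X :=
  ⟨ENNReal.ofReal t • (μ : Measure X) + ENNReal.ofReal (1 - t) • (ν : Measure X), by
    refine ⟨?_⟩
    simp only [Measure.add_apply, Measure.smul_apply, smul_eq_mul, measure_univ, mul_one]
    rw [← ENNReal.ofReal_add h0 (by linarith)]
    norm_num⟩

/-- Convexity of a rate function on probability measures. -/
def ConvexRate [MeasurableSpace X] (J : ProbabilityMeasure X → EReal) : Prop :=
  ∀ μ ν : ProbabilityMeasure X, ∀ t : ℝ, ∀ (h0 : 0 ≤ t) (h1 : t ≤ 1),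
    J (mix t h0 h1 μ ν) ≤ ((t : ℝ) : EReal) * J μ + ((1 - t : ℝ) : EReal) * J ν

-- The free energy functional `F`.
open Classical in
noncomputable def freeEnergy [MeasurableSpace X] (T : X → X) (φ : X → ℝ) (P : ℝ)
    (ν : ProbabilityMeasure X) : EReal :=
  if Invariant T (ν : Measure X) ∧ IntegralGtBot φ (ν : Measure X)
  then ((entropy T (ν : Measure X) : ℝ≥0∞) : EReal) + eintegral φ (ν : Measure X) - ((P : ℝ) : EReal)
  else ⊥

/-! ### Countable Markov shifts -/

variable {S : Type*}

/-- The topological Markov shift with alphabet `S` and transition relation `A`. -/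
def Space (A : S → S → Prop) : Type _ := {x : ℕ → S // ∀ i, A (x i) (x (i + 1))}

variable (A : S → S → Prop)

instance [TopologicalSpace S] : TopologicalSpace (Space A) :=
  inferInstanceAs (TopologicalSpace {x : ℕ → S // ∀ i, A (x i) (x (i + 1))})

noncomputable instance [TopologicalSpace S] : MeasurableSpace (Space A) := borel _

instance [TopologicalSpace S] : BorelSpace (Space A) := ⟨rfl⟩

/-- The left shift. -/
def shift : Space A → Space A := fun x => ⟨fun i => x.1 (i + 1), fun i => x.2 (i + 1)⟩

/-- Admissible words. -/
def Admissible (w : List S) : Prop := w ≠ [] ∧ w.Chain' A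

/-- The cylinder set of a word. -/
def cylinder (w : List S) : Set (Space A) := {x | ∀ i : Fin w.length, x.1 i = w.get i}

variable {A}

/-- The initial word of length `n` of a point. -/
def word (x : Space A) (n : ℕ) : List S := List.ofFn (fun i : Fin n => x.1 i)

variable (A)

/-- `μ` is a Gibbs state for the potential `φ` with constants `c₀` and `P`. -/
def IsGibbsWith [TopologicalSpace S] (φ : Space A → ℝ) (μ : Measure (Space A)) (c₀ P : ℝ) :
    Prop :=
  ∀ n : ℕ, 1 ≤ n → ∀ x : Space A,
    c₀⁻¹ * Real.exp (-(P * n) + birkhoff (shift A) φ n x)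
        ≤ (μ (cylinder A (word x n))).toReal ∧
      (μ (cylinder A (word x n))).toReal
        ≤ c₀ * Real.exp (-(P * n) + birkhoff (shift A) φ n x)

/-- `μ` is a Gibbs state for `φ`. -/
def IsGibbs [TopologicalSpace S] (φ : Space A → ℝ) (μ : Measure (Space A)) : Prop :=
  ∃ c₀ P : ℝ, 1 ≤ c₀ ∧ IsGibbsWith A φ μ c₀ P

/-- The transition matrix has no row or column identically zero. -/
def NoZeroRowCol : Prop := (∀ a : S, ∃ b, A a b) ∧ ∀ b : S, ∃ a, A a b

/-- Finite irreducibility. -/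
def FinitelyIrreducible : Prop :=
  ∃ Λ : Finset (List S), ∀ v w : List S, Admissible A v → Admissible A w →
    ∃ l ∈ Λ, Admissible A (v ++ l ++ w)

/-- Finite primitiveness. -/
def FinitelyPrimitive : Prop :=
  ∃ Λ : Finset (List S), (∃ N : ℕ, ∀ l ∈ Λ, l.length = N) ∧
    ∀ v w : List S, Admissible A v → Admissible A w →
      ∃ l ∈ Λ, Admissible A (v ++ l ++ w)

/-- Topological transitivity. -/
def TopTransitive : Prop :=
  ∀ a b : S, ∃ n : ℕ, 1 ≤ n ∧
    (cylinder A [a] ∩ (shift A)^[n] ⁻¹' (cylinder A [b])).Nonempty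

/-- Varadhan's functional `Q(ψ) = sup_μ (∫ψ dμ - I(μ))`. -/
noncomputable def varQ {X : Type*} [MeasurableSpace X] (I : ProbabilityMeasure X → EReal)
    (ψ : X → ℝ) : EReal :=
  ⨆ μ : ProbabilityMeasure X, (((∫ x, ψ x ∂(μ : Measure X)) : ℝ) : EReal) - I μ

/-- `φ` is uniformly continuous for the standard metric of the shift space. -/
def UnifCont (φ : Space A → ℝ) : Prop :=
  ∀ ε : ℝ, 0 < ε → ∃ N : ℕ, ∀ x y : Space A, (∀ i < N, x.1 i = y.1 i) → |φ x - φ y| ≤ ε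

/-- `φ` is bounded. -/
def Bdd (φ : Space A → ℝ) : Prop := ∃ C : ℝ, ∀ x : Space A, |φ x| ≤ C

end CMS

/-!
By the Gibbs property, `exp S_nφ(x)` is comparable to `exp (P n) μ[x₀ … x_{n-1}]`, up to the
factor `c₀`. A point of `Per_n(σ)`, or of `σ^{-n}y`, is determined by its first `n` symbols, so
these cylinders are disjoint and `Z_n ≤ c₀ exp (P n)`. Conversely, finite primitivity extends
every word `w` of length `n - N` starting with `a` by a connecting word `l ∈ Λ` so that
`w l w` (resp. `w l y₀`) is admissible, which yields a periodic point (resp. an `n`-th preimage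
of `y`) in `[w l]`. Its weight is at least `c₀⁻² exp (P n) μ[w] μ[l] ≥ c₀⁻² D exp (P n) μ[w]`,
where `D > 0` is the least measure of a nonempty cylinder `[l]`, `l ∈ Λ`; summing over `w`
gives `Z_n ≥ c₀⁻² D μ[a] exp (P n)`, and `μ[a] > 0` because `[a]` is nonempty. Hence all four
partition functions are `≍ exp (P n)`.
-/

namespace CMS

variable {S : Type*} {A : S → S → Prop}

section Words

lemma shift_iterate_apply (x : Space A) (k i : ℕ) : ((shift A)^[k] x).1 i = x.1 (i + k) := by
  induction k generalizing x with
  | zero => rfl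
  | succ k ih => rw [Function.iterate_succ_apply, ih]; rfl

@[simp] lemma length_word (x : Space A) (n : ℕ) : (word x n).length = n := List.length_ofFn

@[simp] lemma getElem_word (x : Space A) (n i : ℕ) (h : i < (word x n).length) :
    (word x n)[i] = x.1 i := by
  simp [word]

lemma word_zero (x : Space A) : word x 0 = [] := rfl

lemma word_one (x : Space A) : word x 1 = [x.1 0] := rfl

lemma mem_cylinder_word (x : Space A) (n : ℕ) : x ∈ cylinder A (word x n) := fun i => by simp

lemma word_eq_of_mem_cylinder {x : Space A} {w : List S} (h : x ∈ cylinder A w) :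
    word x w.length = w :=
  List.ext_getElem (length_word x _) fun i _ hi => by simpa using (h ⟨i, hi⟩)

lemma apply_eq_of_word_eq {x x' : Space A} {n i : ℕ} (h : word x n = word x' n) (hi : i < n) :
    x.1 i = x'.1 i :=
  congrFun (List.ofFn_injective h) ⟨i, hi⟩

lemma mem_cylinder_singleton {x : Space A} {a : S} : x ∈ cylinder A [a] ↔ x.1 0 = a := by
  simp [cylinder]

lemma cylinder_nil : cylinder A ([] : List S) = univ :=
  eq_univ_of_forall fun _ i => i.elim0

lemma mem_cylinder_iff_word_eq {x : Space A} {w : List S} :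
    x ∈ cylinder A w ↔ word x w.length = w :=
  ⟨word_eq_of_mem_cylinder, fun h => h ▸ mem_cylinder_word x _⟩

lemma word_add (x : Space A) (m k : ℕ) :
    word x (m + k) = word x m ++ word ((shift A)^[m] x) k := by
  simp [word, List.ofFn_add, shift_iterate_apply, add_comm]

lemma mem_cylinder_append {x : Space A} {v w : List S} :
    x ∈ cylinder A (v ++ w) ↔ x ∈ cylinder A v ∧ (shift A)^[v.length] x ∈ cylinder A w := by
  simp only [mem_cylinder_iff_word_eq, List.length_append, word_add]
  exact List.append_eq_append_iff_of_size_eq_left (by simp)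

lemma admissible_word (x : Space A) {n : ℕ} (hn : n ≠ 0) : Admissible A (word x n) :=
  ⟨by simpa [← List.length_eq_zero_iff] using hn, List.isChain_ofFn.mpr fun i _ => x.2 i⟩

lemma disjoint_cylinder {v w : List S} (hlen : v.length = w.length) (hne : v ≠ w) :
    Disjoint (cylinder A v) (cylinder A w) :=
  disjoint_left.2 fun x hv hw =>
    hne (List.ext_get hlen fun i h₁ h₂ => by rw [← hv ⟨i, h₁⟩, ← hw ⟨i, h₂⟩])

lemma measurableSet_cylinder [TopologicalSpace S] [DiscreteTopology S] (w : List S) :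
    MeasurableSet (cylinder A w) := by
  have : cylinder A w = ⋂ i : Fin w.length, (fun x : Space A => x.1 i) ⁻¹' {w.get i} := by
    ext x; simp [cylinder]
  rw [this]
  refine (isOpen_iInter_of_finite fun i => ?_).measurableSet
  exact (isOpen_discrete _).preimage ((continuous_apply _).comp continuous_subtype_val)

lemma cylinder_singleton_nonempty (hA : ∀ a, ∃ b, A a b) (a : S) :
    (cylinder A [a]).Nonempty := by
  choose f hf using hA
  refine ⟨⟨fun n => f^[n] a, fun i => ?_⟩, mem_cylinder_singleton.2 rfl⟩
  show A (f^[i] a) (f^[i + 1] a)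
  rw [Function.iterate_succ_apply']
  exact hf _

end Words

lemma birkhoff_add {X : Type*} (T : X → X) (φ : X → ℝ) (m k : ℕ) (x : X) :
    birkhoff T φ (m + k) x = birkhoff T φ m x + birkhoff T φ k (T^[m] x) := by
  rw [birkhoff, Finset.sum_range_add]
  congr 1
  exact Finset.sum_congr rfl fun i _ => by rw [← Function.iterate_add_apply, add_comm i m]

section Orbits

lemma apply_mod_of_mem_perSet {n : ℕ} {x : Space A} (hx : x ∈ perSet (shift A) n) (i : ℕ) :
    x.1 i = x.1 (i % n) := by
  have hx' : Function.IsPeriodicPt (shift A) (n * (i / n)) x :=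
    Function.IsPeriodicPt.mul_const hx _
  calc x.1 i = x.1 (i % n + n * (i / n)) := by rw [Nat.mod_add_div]
    _ = x.1 (i % n) := by rw [← shift_iterate_apply, hx'.eq]

lemma apply_add_of_mem_preimSet {n : ℕ} {x y : Space A} (hx : x ∈ preimSet (shift A) n y)
    (i : ℕ) : x.1 (i + n) = y.1 i := by
  rw [← shift_iterate_apply, hx]

lemma injOn_word_perSet {n : ℕ} (hn : n ≠ 0) :
    InjOn (fun x : Space A => word x n) (perSet (shift A) n) := fun x hx x' hx' h =>
  Subtype.ext <| funext fun i => by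
    rw [apply_mod_of_mem_perSet hx, apply_mod_of_mem_perSet hx']
    exact apply_eq_of_word_eq h (Nat.mod_lt _ (Nat.pos_of_ne_zero hn))

lemma injOn_word_preimSet (n : ℕ) (y : Space A) :
    InjOn (fun x : Space A => word x n) (preimSet (shift A) n y) := fun x hx x' hx' h =>
  Subtype.ext <| funext fun i => by
    rcases lt_or_ge i n with hi | hi
    · exact apply_eq_of_word_eq h hi
    · obtain ⟨j, rfl⟩ := Nat.exists_eq_add_of_le' hi
      rw [apply_add_of_mem_preimSet hx, apply_add_of_mem_preimSet hx']

lemma exists_mem_cylinder_perSet {u : List S} (hu : u ≠ [])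
    (hc : (u ++ [u.head hu]).IsChain A) : ∃ x ∈ cylinder A u, x ∈ perSet (shift A) u.length := by
  have hn : 0 < u.length := List.length_pos_iff.2 hu
  have key : ∀ j (hj : j ≤ u.length),
      (u ++ [u.head hu])[j]'(by simp; omega) = u[j % u.length]'(Nat.mod_lt _ hn) := by
    intro j hj
    rcases hj.lt_or_eq with hj | rfl
    · simp [List.getElem_append_left hj, Nat.mod_eq_of_lt hj]
    · simp [List.head_eq_getElem]
  refine ⟨⟨fun i => u[i % u.length]'(Nat.mod_lt _ hn), fun i => ?_⟩, fun i => ?_, ?_⟩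
  · have hi := Nat.mod_lt i hn
    have h := List.isChain_iff_getElem.mp hc (i % u.length) (by simp; omega)
    rw [key _ hi.le, key _ hi] at h
    simpa only [Nat.mod_mod, Nat.succ_eq_add_one, Nat.mod_add_mod] using h
  · simp [Nat.mod_eq_of_lt i.2]
  · exact Subtype.ext <| funext fun i => (shift_iterate_apply _ _ i).trans (by simp)

lemma exists_mem_cylinder_preimSet {u : List S} (y : Space A)
    (hc : (u ++ [y.1 0]).IsChain A) : ∃ x ∈ cylinder A u, x ∈ preimSet (shift A) u.length y := by
  let f : ℕ → S := fun i => if h : i < u.length then u[i] else y.1 (i - u.length)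
  have key : ∀ j (hj : j ≤ u.length), (u ++ [y.1 0])[j]'(by simp; omega) = f j := by
    intro j hj
    rcases hj.lt_or_eq with hj | rfl
    · simp [f, List.getElem_append_left hj, hj]
    · simp [f]
  refine ⟨⟨f, fun i => ?_⟩, fun i => by simp [f], ?_⟩
  · rcases lt_or_ge i u.length with hi | hi
    · have h := List.isChain_iff_getElem.mp hc i (by simp; omega)
      rwa [key _ hi.le, key _ hi] at h
    · simp only [f, dif_neg (show ¬ i < u.length by omega),
        dif_neg (show ¬ i + 1 < u.length by omega),
        show i + 1 - u.length = i - u.length + 1 by omega]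
      exact y.2 _
  · exact Subtype.ext <| funext fun i => (shift_iterate_apply _ _ i).trans (by simp [f])

end Orbits

section Gluing

variable {Λ : Finset (List S)} {N : ℕ}

lemma exists_mem_cylinder_append_perSet (hΛN : ∀ l ∈ Λ, l.length = N)
    (hΛ : ∀ v w : List S, Admissible A v → Admissible A w → ∃ l ∈ Λ, Admissible A (v ++ l ++ w))
    {n : ℕ} (hn : N < n) (z : Space A) :
    ∃ l ∈ Λ, ∃ x ∈ cylinder A (word z (n - N) ++ l), x ∈ perSet (shift A) n := by
  have hw := admissible_word z (show n - N ≠ 0 by omega)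
  obtain ⟨l, hl, hadm⟩ := hΛ _ _ hw hw
  have hu : word z (n - N) ++ l ≠ [] := List.append_ne_nil_of_left_ne_nil hw.1 _
  have hc : (word z (n - N) ++ l ++ [(word z (n - N) ++ l).head hu]).IsChain A := by
    refine hadm.2.prefix ((List.prefix_append_right_inj _).2 ⟨(word z (n - N)).tail, ?_⟩)
    rw [List.head_append_of_ne_nil hw.1]
    exact List.cons_head_tail hw.1
  obtain ⟨x, hx, hxper⟩ := exists_mem_cylinder_perSet hu hc
  exact ⟨l, hl, x, hx, by simpa [hΛN l hl, Nat.sub_add_cancel hn.le] using hxper⟩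

lemma exists_mem_cylinder_append_preimSet (hΛN : ∀ l ∈ Λ, l.length = N)
    (hΛ : ∀ v w : List S, Admissible A v → Admissible A w → ∃ l ∈ Λ, Admissible A (v ++ l ++ w))
    {n : ℕ} (hn : N < n) (y z : Space A) :
    ∃ l ∈ Λ, ∃ x ∈ cylinder A (word z (n - N) ++ l), x ∈ preimSet (shift A) n y := by
  obtain ⟨l, hl, hadm⟩ :=
    hΛ _ _ (admissible_word z (show n - N ≠ 0 by omega)) (admissible_word y one_ne_zero)
  rw [word_one] at hadm
  obtain ⟨x, hx, hxpre⟩ := exists_mem_cylinder_preimSet y hadm.2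
  exact ⟨l, hl, x, hx, by simpa [hΛN l hl, Nat.sub_add_cancel hn.le] using hxpre⟩

end Gluing

section Gibbs

variable [TopologicalSpace S] {φ : Space A → ℝ} {μ : Measure (Space A)}
  [IsProbabilityMeasure μ] {c₀ P : ℝ}

lemma IsGibbsWith.exp_birkhoff_le (hG : IsGibbsWith A φ μ c₀ P) (hc₀ : 1 ≤ c₀) (n : ℕ)
    (x : Space A) :
    Real.exp (birkhoff (shift A) φ n x) ≤
      c₀ * Real.exp (P * n) * (μ (cylinder A (word x n))).toReal := by
  have hc : 0 < c₀ := by linarith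
  rcases Nat.eq_zero_or_pos n with rfl | hn
  · simpa [birkhoff, word_zero, cylinder_nil] using hc₀
  · have h := (hG n hn x).1
    rw [Real.exp_add, Real.exp_neg] at h
    calc Real.exp (birkhoff (shift A) φ n x)
        = c₀ * Real.exp (P * n) *
            (c₀⁻¹ * ((Real.exp (P * n))⁻¹ * Real.exp (birkhoff (shift A) φ n x))) := by
          field_simp
      _ ≤ _ := by gcongr

lemma IsGibbsWith.le_exp_birkhoff (hG : IsGibbsWith A φ μ c₀ P) (hc₀ : 1 ≤ c₀) (n : ℕ)
    (x : Space A) :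
    c₀⁻¹ * Real.exp (P * n) * (μ (cylinder A (word x n))).toReal ≤
      Real.exp (birkhoff (shift A) φ n x) := by
  have hc : 0 < c₀ := by linarith
  rcases Nat.eq_zero_or_pos n with rfl | hn
  · simpa [birkhoff, word_zero, cylinder_nil] using inv_le_one_of_one_le₀ hc₀
  · have h := (hG n hn x).2
    rw [Real.exp_add, Real.exp_neg] at h
    calc c₀⁻¹ * Real.exp (P * n) * (μ (cylinder A (word x n))).toReal
        ≤ c₀⁻¹ * Real.exp (P * n) *
            (c₀ * ((Real.exp (P * n))⁻¹ * Real.exp (birkhoff (shift A) φ n x))) := by gcongr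
      _ = Real.exp (birkhoff (shift A) φ n x) := by field_simp

lemma IsGibbsWith.measure_cylinder_word_pos (hG : IsGibbsWith A φ μ c₀ P) (hc₀ : 1 ≤ c₀)
    (n : ℕ) (x : Space A) : 0 < (μ (cylinder A (word x n))).toReal := by
  have hc : 0 < c₀ := by linarith
  exact pos_of_mul_pos_right ((Real.exp_pos _).trans_le (hG.exp_birkhoff_le hc₀ n x))
    (by positivity)

lemma IsGibbsWith.exists_pos_le_measure_cylinder (hG : IsGibbsWith A φ μ c₀ P) (hc₀ : 1 ≤ c₀)
    (Λ : Finset (List S)) :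
    ∃ D > 0, ∀ l ∈ Λ, (cylinder A l).Nonempty → D ≤ (μ (cylinder A l)).toReal := by
  classical
  set Λ' := Λ.filter fun l => (cylinder A l).Nonempty
  have hmem : ∀ l ∈ Λ, (cylinder A l).Nonempty → l ∈ Λ' := fun l hl hne =>
    Finset.mem_filter.2 ⟨hl, hne⟩
  rcases Λ'.eq_empty_or_nonempty with hΛ' | hΛ'
  · refine ⟨1, one_pos, fun l hl hne => ?_⟩
    simpa [hΛ'] using hmem l hl hne
  · obtain ⟨l₀, hl₀, hmin⟩ := Λ'.exists_min_image (fun l => (μ (cylinder A l)).toReal) hΛ'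
    obtain ⟨z, hz⟩ := (Finset.mem_filter.1 hl₀).2
    refine ⟨_, ?_, fun l hl hne => hmin l (hmem l hl hne)⟩
    simpa [word_eq_of_mem_cylinder hz] using hG.measure_cylinder_word_pos hc₀ l₀.length z

end Gibbs

lemma Zfn_mono {X : Type*} [MeasurableSpace X] (T : X → X) (φ : X → ℝ) (n : ℕ)
    {C C' : Set X} (h : C ⊆ C') : Zfn T φ n C ≤ Zfn T φ n C' :=
  ENNReal.tsum_mono_subtype (fun x => ENNReal.ofReal (Real.exp (birkhoff T φ n x))) h

section PartitionFunction

variable [TopologicalSpace S] {φ : Space A → ℝ} {μ : Measure (Space A)} {c₀ P : ℝ}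

lemma Zfn_le_of_injOn [DiscreteTopology S] [IsProbabilityMeasure μ]
    (hG : IsGibbsWith A φ μ c₀ P) (hc₀ : 1 ≤ c₀) (n : ℕ) {C : Set (Space A)}
    (hinj : InjOn (fun x => word x n) C) :
    Zfn (shift A) φ n C ≤ ENNReal.ofReal (c₀ * Real.exp (P * n)) := by
  have hc : 0 < c₀ := by linarith
  have hdisj :
      Pairwise (Function.onFun Disjoint fun x : C => cylinder A (word (x : Space A) n)) :=
    fun x x' hne => disjoint_cylinder (by simp) fun h => hne (Subtype.ext (hinj x.2 x'.2 h))
  calc Zfn (shift A) φ n C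
      ≤ ∑' x : C, ENNReal.ofReal (c₀ * Real.exp (P * n)) *
          μ (cylinder A (word (x : Space A) n)) := by
        refine ENNReal.tsum_le_tsum fun x => ?_
        rw [← ENNReal.ofReal_toReal (measure_ne_top μ _), ← ENNReal.ofReal_mul (by positivity)]
        exact ENNReal.ofReal_le_ofReal (hG.exp_birkhoff_le hc₀ n x)
    _ ≤ ENNReal.ofReal (c₀ * Real.exp (P * n)) *
          μ (⋃ x : C, cylinder A (word (x : Space A) n)) := by
        rw [ENNReal.tsum_mul_left]
        gcongr
        exact tsum_meas_le_meas_iUnion_of_disjoint μ (fun _ => measurableSet_cylinder _) hdisj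
    _ ≤ ENNReal.ofReal (c₀ * Real.exp (P * n)) := mul_le_of_le_one_right' prob_le_one

lemma ofReal_mul_measure_le_Zfn [Countable S] [IsFiniteMeasure μ] {n m : ℕ}
    {B C : Set (Space A)} {K : ℝ} (hK : 0 ≤ K)
    (H : ∀ z ∈ B, ∃ x ∈ C, word x m = word z m ∧
      K * (μ (cylinder A (word z m))).toReal ≤ Real.exp (birkhoff (shift A) φ n x)) :
    ENNReal.ofReal K * μ B ≤ Zfn (shift A) φ n C := by
  let W := (fun z => word z m) '' B
  have H' : ∀ w : W, ∃ x : C, word (x : Space A) m = w ∧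
      ENNReal.ofReal K * μ (cylinder A w) ≤
        ENNReal.ofReal (Real.exp (birkhoff (shift A) φ n x)) := by
    rintro ⟨_, z, hz, rfl⟩
    obtain ⟨x, hxC, hxz, hx⟩ := H z hz
    refine ⟨⟨x, hxC⟩, hxz, ?_⟩
    rw [← ENNReal.ofReal_toReal (measure_ne_top μ _), ← ENNReal.ofReal_mul hK]
    exact ENNReal.ofReal_le_ofReal hx
  choose x hxw hx using H'
  have hinj : Function.Injective x := fun w w' h =>
    Subtype.ext ((hxw w).symm.trans (h ▸ hxw w'))
  calc ENNReal.ofReal K * μ B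
      ≤ ENNReal.ofReal K * ∑' w : W, μ (cylinder A w) := by
        gcongr
        refine (measure_mono fun z hz => ?_).trans (measure_iUnion_le _)
        exact mem_iUnion.2 ⟨⟨_, z, hz, rfl⟩, mem_cylinder_word z m⟩
    _ = ∑' w : W, ENNReal.ofReal K * μ (cylinder A w) := ENNReal.tsum_mul_left.symm
    _ ≤ ∑' w : W, ENNReal.ofReal (Real.exp (birkhoff (shift A) φ n (x w))) :=
        ENNReal.tsum_le_tsum hx
    _ ≤ Zfn (shift A) φ n C := ENNReal.tsum_comp_le_tsum_of_injective hinj _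

lemma le_Zfn_cylinder_inter [Countable S] [IsProbabilityMeasure μ]
    (hG : IsGibbsWith A φ μ c₀ P) (hc₀ : 1 ≤ c₀) {Λ : Finset (List S)} {N : ℕ}
    (hΛN : ∀ l ∈ Λ, l.length = N) {D : ℝ} (hD0 : 0 ≤ D)
    (hD : ∀ l ∈ Λ, (cylinder A l).Nonempty → D ≤ (μ (cylinder A l)).toReal)
    (a : S) (C : Set (Space A)) {n : ℕ} (hn : N < n)
    (H : ∀ z ∈ cylinder A [a], ∃ l ∈ Λ, ∃ x ∈ cylinder A (word z (n - N) ++ l), x ∈ C) :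
    ENNReal.ofReal (c₀⁻¹ * c₀⁻¹ * D * (μ (cylinder A [a])).toReal * Real.exp (P * n)) ≤
      Zfn (shift A) φ n (cylinder A [a] ∩ C) := by
  have hc : 0 < c₀ := by linarith
  set m := n - N
  have hmn : (n : ℝ) = m + N := by norm_cast; omega
  have hK : 0 ≤ c₀⁻¹ * c₀⁻¹ * D * Real.exp (P * n) := by positivity
  rw [mul_right_comm, ENNReal.ofReal_mul hK, ENNReal.ofReal_toReal (measure_ne_top μ _)]
  refine ofReal_mul_measure_le_Zfn (μ := μ) (m := m) hK fun z hz => ?_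
  obtain ⟨l, hl, x, hx, hxC⟩ := H z hz
  rw [mem_cylinder_append, mem_cylinder_iff_word_eq, mem_cylinder_iff_word_eq, length_word,
    hΛN l hl] at hx
  obtain ⟨hxz, hxl⟩ := hx
  refine ⟨x, ⟨?_, hxC⟩, hxz, ?_⟩
  · rw [mem_cylinder_singleton, apply_eq_of_word_eq hxz (by omega)]
    exact mem_cylinder_singleton.1 hz
  have hDl : D ≤ (μ (cylinder A (word ((shift A)^[m] x) N))).toReal := by
    rw [hxl]
    exact hD l hl ⟨_, hxl ▸ mem_cylinder_word _ N⟩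
  calc c₀⁻¹ * c₀⁻¹ * D * Real.exp (P * n) * (μ (cylinder A (word z m))).toReal
      = c₀⁻¹ * Real.exp (P * m) * (μ (cylinder A (word x m))).toReal *
          (c₀⁻¹ * Real.exp (P * N) * D) := by
        rw [hxz, hmn, mul_add, Real.exp_add]; ring
    _ ≤ c₀⁻¹ * Real.exp (P * m) * (μ (cylinder A (word x m))).toReal *
          (c₀⁻¹ * Real.exp (P * N) * (μ (cylinder A (word ((shift A)^[m] x) N))).toReal) := by
        gcongr
    _ ≤ Real.exp (birkhoff (shift A) φ m x) *
          Real.exp (birkhoff (shift A) φ N ((shift A)^[m] x)) :=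
        mul_le_mul (hG.le_exp_birkhoff hc₀ m x) (hG.le_exp_birkhoff hc₀ N _) (by positivity)
          (Real.exp_pos _).le
    _ = Real.exp (birkhoff (shift A) φ n x) := by
        rw [← Real.exp_add, ← birkhoff_add, Nat.sub_add_cancel hn.le]

end PartitionFunction

lemma tendsto_inv_mul_log_of_le_of_le {Z : ℕ → ℝ≥0∞} {P c₁ c₂ : ℝ} (hc₁ : 0 < c₁)
    (hc₂ : 0 < c₂) (h₁ : ∀ᶠ n : ℕ in atTop, ENNReal.ofReal (c₁ * Real.exp (P * n)) ≤ Z n)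
    (h₂ : ∀ᶠ n : ℕ in atTop, Z n ≤ ENNReal.ofReal (c₂ * Real.exp (P * n))) :
    Tendsto (fun n : ℕ => (((n : ℝ)⁻¹ : ℝ) : EReal) * ENNReal.log (Z n)) atTop
      (𝓝 (P : EReal)) := by
  have hbound : ∀ c > 0, Tendsto (fun n : ℕ => (((n : ℝ)⁻¹ : ℝ) : EReal) *
      ENNReal.log (ENNReal.ofReal (c * Real.exp (P * n)))) atTop (𝓝 (P : EReal)) := by
    intro c hc
    have h : Tendsto (fun n : ℕ => (n : ℝ)⁻¹ * Real.log c + P) atTop (𝓝 P) := by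
      simpa using (tendsto_inv_atTop_nhds_zero_nat.mul_const (Real.log c)).add_const P
    refine (EReal.tendsto_coe.2 h).congr' ?_
    filter_upwards [eventually_ne_atTop 0] with n hn
    rw [ENNReal.log_ofReal_of_pos (by positivity), Real.log_mul hc.ne' (Real.exp_pos _).ne',
      Real.log_exp, ← EReal.coe_mul]
    congr 1
    field_simp
  refine tendsto_of_tendsto_of_tendsto_of_le_of_le' (hbound c₁ hc₁) (hbound c₂ hc₂) ?_ ?_
  · filter_upwards [h₁] with n h
    exact mul_le_mul_of_nonneg_left (ENNReal.log_le_log h) (EReal.coe_nonneg.2 (by positivity))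
  · filter_upwards [h₂] with n h
    exact mul_le_mul_of_nonneg_left (ENNReal.log_le_log h) (EReal.coe_nonneg.2 (by positivity))

end CMS

open CMS in
theorem pressure_expressions_general {S : Type*} [Countable S] [TopologicalSpace S] [DiscreteTopology S]
    (A : S → S → Prop) (hA : NoZeroRowCol A) (hprim : FinitelyPrimitive A)
    (φ : Space A → ℝ)
    (μφ : Measure (Space A)) (hprob : IsProbabilityMeasure μφ) (c₀ P : ℝ) (hc₀ : 1 ≤ c₀)
    (hGibbs : IsGibbsWith A φ μφ c₀ P) :
    ∀ a : S, ∀ y : Space A,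
      Tendsto (fun n : ℕ => (((n : ℝ)⁻¹ : ℝ) : EReal) *
          ENNReal.log (Zfn (shift A) φ n (cylinder A [a] ∩ perSet (shift A) n)))
        atTop (nhds ((P : ℝ) : EReal)) ∧
      Tendsto (fun n : ℕ => (((n : ℝ)⁻¹ : ℝ) : EReal) *
          ENNReal.log (Zfn (shift A) φ n (perSet (shift A) n)))
        atTop (nhds ((P : ℝ) : EReal)) ∧
      Tendsto (fun n : ℕ => (((n : ℝ)⁻¹ : ℝ) : EReal) *
          ENNReal.log (Zfn (shift A) φ n (cylinder A [a] ∩ preimSet (shift A) n y)))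
        atTop (nhds ((P : ℝ) : EReal)) ∧
      Tendsto (fun n : ℕ => (((n : ℝ)⁻¹ : ℝ) : EReal) *
          ENNReal.log (Zfn (shift A) φ n (preimSet (shift A) n y)))
        atTop (nhds ((P : ℝ) : EReal)) := by
  intro a y
  obtain ⟨Λ, ⟨N, hΛN⟩, hΛ⟩ := hprim
  obtain ⟨D, hD, hDle⟩ := hGibbs.exists_pos_le_measure_cylinder hc₀ Λ
  obtain ⟨z, hz⟩ := cylinder_singleton_nonempty hA.1 a
  have hμa := hGibbs.measure_cylinder_word_pos hc₀ 1 z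
  rw [word_one, mem_cylinder_singleton.1 hz] at hμa
  have hc : 0 < c₀ := by linarith
  have hc₁ : 0 < c₀⁻¹ * c₀⁻¹ * D * (μφ (cylinder A [a])).toReal := by positivity
  have hlow_per := (eventually_gt_atTop N).mono fun n hn =>
    le_Zfn_cylinder_inter hGibbs hc₀ hΛN hD.le hDle a _ hn fun z _ =>
      exists_mem_cylinder_append_perSet hΛN hΛ hn z
  have hlow_pre := (eventually_gt_atTop N).mono fun n hn =>
    le_Zfn_cylinder_inter hGibbs hc₀ hΛN hD.le hDle a _ hn fun z _ =>
      exists_mem_cylinder_append_preimSet hΛN hΛ hn y z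
  have hup_per := (eventually_ne_atTop 0).mono fun n hn =>
    Zfn_le_of_injOn (φ := φ) hGibbs hc₀ n (injOn_word_perSet hn)
  have hup_pre := Eventually.of_forall (f := atTop) fun n =>
    Zfn_le_of_injOn (φ := φ) hGibbs hc₀ n (injOn_word_preimSet n y)
  have hinter : ∀ n C, Zfn (shift A) φ n (cylinder A [a] ∩ C) ≤ Zfn (shift A) φ n C :=
    fun n C => Zfn_mono _ _ _ inter_subset_right
  exact ⟨tendsto_inv_mul_log_of_le_of_le hc₁ hc hlow_per
      (hup_per.mono fun n h => (hinter n _).trans h),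
    tendsto_inv_mul_log_of_le_of_le hc₁ hc (hlow_per.mono fun n h => h.trans (hinter n _)) hup_per,
    tendsto_inv_mul_log_of_le_of_le hc₁ hc hlow_pre
      (hup_pre.mono fun n h => (hinter n _).trans h),
    tendsto_inv_mul_log_of_le_of_le hc₁ hc (hlow_pre.mono fun n h => h.trans (hinter n _)) hup_pre⟩

open CMS in
/-- **Expressions of the pressure.** For a finitely primitive countable Markov shift with a
Gibbs state (whose Gibbs constant `P` equals the pressure `P(φ)`), for all `a ∈ S` and
`y ∈ X` the exponential growth rates of `Z_n(φ, [a] ∩ Per_n(σ))`, `Z_n(φ, Per_n(σ))`,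
`Z_n(φ, [a] ∩ σ^{-n}y)` and `Z_n(φ, σ^{-n}y)` all equal `P(φ)`. -/
theorem pressure_expressions {S : Type*} [Countable S] [TopologicalSpace S] [DiscreteTopology S]
    (A : S → S → Prop) (hA : NoZeroRowCol A) (hprim : FinitelyPrimitive A)
    (φ : Space A → ℝ) (hφ : Measurable φ)
    (μφ : Measure (Space A)) (hprob : IsProbabilityMeasure μφ) (c₀ P : ℝ) (hc₀ : 1 ≤ c₀)
    (hGibbs : IsGibbsWith A φ μφ c₀ P) :
    ∀ a : S, ∀ y : Space A,
      Tendsto (fun n : ℕ => (((n : ℝ)⁻¹ : ℝ) : EReal) *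
          ENNReal.log (Zfn (shift A) φ n (cylinder A [a] ∩ perSet (shift A) n)))
        atTop (nhds ((P : ℝ) : EReal)) ∧
      Tendsto (fun n : ℕ => (((n : ℝ)⁻¹ : ℝ) : EReal) *
          ENNReal.log (Zfn (shift A) φ n (perSet (shift A) n)))
        atTop (nhds ((P : ℝ) : EReal)) ∧
      Tendsto (fun n : ℕ => (((n : ℝ)⁻¹ : ℝ) : EReal) *
          ENNReal.log (Zfn (shift A) φ n (cylinder A [a] ∩ preimSet (shift A) n y)))
        atTop (nhds ((P : ℝ) : EReal)) ∧
      Tendsto (fun n : ℕ => (((n : ℝ)⁻¹ : ℝ) : EReal) *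
          ENNReal.log (Zfn (shift A) φ n (preimSet (shift A) n y)))
        atTop (nhds ((P : ℝ) : EReal)) :=
  pressure_expressions_general A hA hprim φ μφ hprob c₀ P hc₀ hGibbs
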